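/- Let (X,T) be a topological dynamical system and μ ∈ M(X,T). If the measure preserving system (X,B,μ,T) is rigid (there is a strictly increasing sequence (n_i) with f∘T^{n_i} → f in L² for all f ∈ L²(μ)), then there exists a strictly increasing sequence A ⊆ ℕ such that (X,T) is μ-A-equicontinuous. -/

import Mathlib

/-!
Rigidity gives `d(T^{t k} x, c) → d(x, c)` in `L²`, hence in measure, for every `c`; since
`X` is covered by finitely many `ε/3`-balls, this forces `T^{t k} → id` in measure. A subsequence
converges almost everywhere, hence, by Egorov's theorem and inner regularity, uniformly on a compact
set `K` of measure close to `1`. Maps that are uniformly continuous and converge uniformly on `K` to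
a uniformly continuous map are uniformly equicontinuous on `K`.
-/

open MeasureTheory Filter Topology

theorem Metric.uniformEquicontinuousOn_iff {ι α β : Type*} [PseudoMetricSpace α]
    [PseudoMetricSpace β] {F : ι → β → α} {S : Set β} :
    UniformEquicontinuousOn F S ↔ ∀ ε > (0 : ℝ), ∃ δ > (0 : ℝ),
      ∀ x ∈ S, ∀ y ∈ S, dist x y < δ → ∀ i, dist (F i x) (F i y) < ε := by
  rw [(uniformity_basis_dist.inf_principal (S ×ˢ S)).uniformEquicontinuousOn_iff
    uniformity_basis_dist]
  simp only [Set.mem_inter_iff, Set.mem_ofPred_eq, Set.mem_prod]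
  exact forall₂_congr fun ε _ => exists_congr fun δ => and_congr_right fun _ =>
    ⟨fun h x hx y hy hxy => h x y ⟨hxy, hx, hy⟩, fun h x y ⟨hxy, hx, hy⟩ => h x hx y hy hxy⟩

theorem uniformEquicontinuousOn_of_tendstoUniformlyOn {α β : Type*} [PseudoMetricSpace α]
    [PseudoMetricSpace β] {F : ℕ → β → α} {f : β → α} {S : Set β}
    (hF : ∀ n, UniformContinuousOn (F n) S) (hf : UniformContinuousOn f S)
    (hFf : TendstoUniformlyOn F f atTop S) : UniformEquicontinuousOn F S := by
  rw [Metric.uniformEquicontinuousOn_iff]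
  intro ε hε
  obtain ⟨N, hN⟩ :=
    eventually_atTop.1 (Metric.tendstoUniformlyOn_iff.1 hFf (ε / 3) (by positivity))
  have hhead : UniformEquicontinuousOn (fun n : Fin N => F n) S :=
    uniformEquicontinuousOn_finite.2 fun n => hF n
  obtain ⟨δ₁, hδ₁, hhead⟩ := Metric.uniformEquicontinuousOn_iff.1 hhead ε hε
  obtain ⟨δ₂, hδ₂, hlim⟩ := Metric.uniformContinuousOn_iff.1 hf (ε / 3) (by positivity)
  refine ⟨min δ₁ δ₂, lt_min hδ₁ hδ₂, fun x hx y hy hxy n => ?_⟩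
  rcases lt_or_ge n N with hn | hn
  · exact hhead x hx y hy (hxy.trans_le (min_le_left _ _)) ⟨n, hn⟩
  · calc dist (F n x) (F n y) ≤ dist (F n x) (f x) + dist (f x) (f y) + dist (f y) (F n y) :=
          dist_triangle4 _ _ _ _
      _ < ε / 3 + ε / 3 + ε / 3 := by
          gcongr
          exacts [dist_comm (F n x) _ ▸ hN n hn x hx,
            hlim x hx y hy (hxy.trans_le (min_le_right _ _)), hN n hn y hy]
      _ = ε := by ring

theorem tendstoInMeasure_of_forall_tendstoInMeasure_dist {ι α X : Type*} [MeasurableSpace α]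
    {μ : Measure α} {l : Filter ι} [PseudoMetricSpace X] [CompactSpace X]
    {g : ι → α → X} {f : α → X}
    (h : ∀ c : X, TendstoInMeasure μ (fun n x => dist (g n x) c) l (fun x => dist (f x) c)) :
    TendstoInMeasure μ g l f := by
  simp only [tendstoInMeasure_iff_dist] at h ⊢
  intro ε hε
  obtain ⟨s, -, hs, hcover⟩ := finite_cover_balls_of_compact (isCompact_univ (X := X))
    (show (0 : ℝ) < ε / 3 by positivity)
  have hsub : ∀ n, {x | ε ≤ dist (g n x) (f x)} ⊆
      ⋃ c ∈ hs.toFinset, {x | ε / 3 ≤ dist (dist (g n x) c) (dist (f x) c)} := by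
    intro n x hx
    obtain ⟨c, hc, hxc⟩ := Set.mem_iUnion₂.1 (hcover (Set.mem_univ (f x)))
    refine Set.mem_biUnion (hs.mem_toFinset.2 hc) ?_
    rw [Metric.mem_ball] at hxc
    have := dist_triangle_right (g n x) (f x) c
    simp only [Set.mem_ofPred_eq] at hx ⊢
    rw [Real.dist_eq]
    exact le_abs.2 (Or.inl (by linarith))
  refine tendsto_of_tendsto_of_tendsto_of_le_of_le tendsto_const_nhds ?_ (fun n => zero_le)
    (fun n => (measure_mono (hsub n)).trans (measure_biUnion_finset_le _ _))
  simpa using tendsto_finsetSum hs.toFinset fun c _ => h c (ε / 3) (by positivity)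

theorem exists_isCompact_lt_measure_tendstoUniformlyOn {α β : Type*} [TopologicalSpace α]
    [MeasurableSpace α] {μ : Measure α} [IsFiniteMeasure μ] [μ.InnerRegular] [MetricSpace β]
    {f : ℕ → α → β} {g : α → β} (hf : ∀ n, StronglyMeasurable (f n)) (hg : StronglyMeasurable g)
    (hfg : ∀ᵐ x ∂μ, Tendsto (fun n => f n x) atTop (𝓝 (g x))) {r : ENNReal}
    (hr : r < μ Set.univ) : ∃ K, IsCompact K ∧ r < μ K ∧ TendstoUniformlyOn f g atTop K := by
  obtain ⟨η, hη, hrη⟩ := ENNReal.lt_iff_exists_add_pos_lt.1 hr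
  obtain ⟨E, hE, hμE, hunif⟩ := tendstoUniformlyOn_of_ae_tendsto' hf hg hfg (ε := η) hη
  have hr' : r < μ Eᶜ := by
    rw [measure_compl hE (measure_ne_top μ E)]
    refine (ENNReal.cancel_of_ne (measure_ne_top μ E)).lt_tsub_iff_left.2 ?_
    calc μ E + r ≤ η + r := by gcongr; simpa using hμE
      _ < μ Set.univ := by rwa [add_comm]
  obtain ⟨K, hKE, hK, hrK⟩ := hE.compl.exists_lt_isCompact hr'
  exact ⟨K, hK, hrK, hunif.mono hKE⟩

theorem stmt10_general {X : Type*} [MetricSpace X] [CompactSpace X] [MeasurableSpace X]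
    [BorelSpace X] (μ : Measure X) [IsProbabilityMeasure μ] (T : X ≃ₜ X)
    (hrigid : ∃ t : ℕ → ℕ, StrictMono t ∧ ∀ f : X → ℝ, MemLp f 2 μ →
      Tendsto (fun k => eLpNorm (fun x => f ((⇑T)^[t k] x) - f x) 2 μ)
        atTop (𝓝 0)) :
    ∃ a : ℕ → ℕ, StrictMono a ∧
      ∀ τ > (0 : ℝ), ∃ K : Set X, IsCompact K ∧
        μ K > ENNReal.ofReal (1 - τ) ∧ ∀ ε > (0 : ℝ), ∃ δ > (0 : ℝ),
        ∀ x ∈ K, ∀ y ∈ K, dist x y < δ →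
          ∀ n : ℕ, dist ((⇑T)^[a n] x) ((⇑T)^[a n] y) < ε := by
  obtain ⟨t, ht, hrigid⟩ := hrigid
  have hcont (n : ℕ) : Continuous (⇑T)^[n] := T.continuous.iterate n
  have hmeas : TendstoInMeasure μ (fun k => (⇑T)^[t k]) atTop id := by
    refine tendstoInMeasure_of_forall_tendstoInMeasure_dist fun c => ?_
    have hdist : Continuous fun x : X => dist x c := continuous_id.dist continuous_const
    have hL2 := hrigid _ (hdist.memLp_of_hasCompactSupport (HasCompactSupport.of_compactSpace _))
    exact tendstoInMeasure_of_tendsto_eLpNorm two_ne_zero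
      (fun k => (hdist.comp (hcont (t k))).aestronglyMeasurable) hdist.aestronglyMeasurable
      (by simpa only [Pi.sub_def, id] using hL2)
  obtain ⟨ns, hns, hae⟩ := hmeas.exists_seq_tendsto_ae
  refine ⟨t ∘ ns, ht.comp hns, fun τ hτ => ?_⟩
  obtain ⟨K, hK, hμK, hunif⟩ := exists_isCompact_lt_measure_tendstoUniformlyOn
    (fun k => (hcont _).stronglyMeasurable) stronglyMeasurable_id hae
    (r := ENNReal.ofReal (1 - τ)) (by simpa [ENNReal.ofReal_lt_one] using hτ)
  refine ⟨K, hK, hμK, Metric.uniformEquicontinuousOn_iff.1 ?_⟩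
  exact uniformEquicontinuousOn_of_tendstoUniformlyOn
    (fun k => (CompactSpace.uniformContinuous_of_continuous (hcont _)).uniformContinuousOn)
    uniformContinuous_id.uniformContinuousOn hunif

theorem stmt10 {X : Type*} [MetricSpace X] [CompactSpace X] [MeasurableSpace X]
    [BorelSpace X] (μ : Measure X) [IsProbabilityMeasure μ] (T : X ≃ₜ X)
    (hT : MeasurePreserving T μ μ)
    (hrigid : ∃ t : ℕ → ℕ, StrictMono t ∧ ∀ f : X → ℝ, MemLp f 2 μ →
      Tendsto (fun k => eLpNorm (fun x => f ((⇑T)^[t k] x) - f x) 2 μ)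
        atTop (𝓝 0)) :
    ∃ a : ℕ → ℕ, StrictMono a ∧
      ∀ τ > (0 : ℝ), ∃ K : Set X, IsCompact K ∧
        μ K > ENNReal.ofReal (1 - τ) ∧ ∀ ε > (0 : ℝ), ∃ δ > (0 : ℝ),
        ∀ x ∈ K, ∀ y ∈ K, dist x y < δ →
          ∀ n : ℕ, dist ((⇑T)^[a n] x) ((⇑T)^[a n] y) < ε :=
  stmt10_general μ T hrigid
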